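/- Let q > r ≥ 1 be positive integers with gcd(q,r)=1 and let n be sufficiently large. Then the number of maximal subsets of {1,...,n} that contain no solution (x,y,z) to qx+qy=rz is at least 2^(⌈⌊rn/(2q) − rq/2⌋·(q−1)/q⌉ − 1). -/

import Mathlib

/-!
Put `m = ⌊n / q²⌋`, `R = rqm` and `z = q²m ≤ n`, so that `qR = rz` and `q ∣ R`, and let `P` be the
set of `a ≤ (R - 1) / 2` not divisible by `q`. For every `S ⊆ P` the set
`{z} ∪ S ∪ {R - a : a ∈ P \ S}` is L-free: coprimality forces the `z`-variable of a solution to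
be `z` itself, and then `x + y = R` has no solution in the set. Any L-free superset `M` of it
satisfies `M ∩ P = S`, since `a ∈ P \ S` would give the solution `(a, R - a, z)`. Extending these
sets to maximal ones shows that `M ↦ M ∩ P` maps the maximal L-free sets onto the subsets of `P`,
and `|P| = U - ⌊U / q⌋` with `U = (R - 1) / 2` exceeds the exponent.
-/

open Finset

def LFree (q r : ℕ) (A : Finset ℕ) : Prop :=
  ∀ x ∈ A, ∀ y ∈ A, ∀ z ∈ A, q * x + q * y ≠ r * z

theorem two_pow_card_le_card_maximal {α : Type*} [DecidableEq α] {p : Finset α → Prop}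
    {I s : Finset α} (hpI : ∀ A, p A → A ⊆ I) (htrace : ∀ S ⊆ s, ∃ M, Maximal p M ∧ M ∩ s = S) :
    2 ^ #s ≤ Nat.card {A // Maximal p A} := by
  have : Finite {A // Maximal p A} :=
    Finite.of_injective (fun A ↦ (⟨A.1, mem_powerset.2 (hpI _ A.2.prop)⟩ : I.powerset))
      fun _ _ h ↦ Subtype.ext (Subtype.mk.inj h)
  have htrace_surj : Function.Surjective
      fun A : {A // Maximal p A} ↦ (⟨A.1 ∩ s, mem_powerset.2 inter_subset_right⟩ : s.powerset) := by
    rintro ⟨S, hS⟩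
    obtain ⟨M, hM, hMS⟩ := htrace S (mem_powerset.1 hS)
    exact ⟨⟨M, hM⟩, Subtype.ext hMS⟩
  calc 2 ^ #s = Nat.card s.powerset := by
        rw [Nat.card_eq_fintype_card, Fintype.card_coe, card_powerset]
    _ ≤ Nat.card {A // Maximal p A} := Nat.card_le_card_of_surjective _ htrace_surj

theorem exists_maximal_lfree_superset {q r n : ℕ} {C : Finset ℕ} (hC : C ⊆ Icc 1 n)
    (hCfree : LFree q r C) :
    ∃ M, C ⊆ M ∧ Maximal (fun A ↦ A ⊆ Icc 1 n ∧ LFree q r A) M := by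
  have hfin : {A : Finset ℕ | A ⊆ Icc 1 n ∧ LFree q r A}.Finite :=
    (Icc 1 n).powerset.finite_toSet.subset fun A hA ↦ mem_powerset.2 hA.1
  exact hfin.exists_le_maximal ⟨hC, hCfree⟩

section Seed

variable {q r n R z : ℕ} {P S M : Finset ℕ}

def seed (z R : ℕ) (P S : Finset ℕ) : Finset ℕ :=
  insert z (S ∪ (P \ S).image (R - ·))

theorem mem_seed {w : ℕ} :
    w ∈ seed z R P S ↔ w = z ∨ w ∈ S ∨ ∃ a ∈ P, a ∉ S ∧ R - a = w := by
  simp [seed, and_assoc]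

theorem seed_subset_Icc (hP : ∀ a ∈ P, 0 < a ∧ 2 * a < R) (hzR : R < z) (hzn : z ≤ n)
    (hS : S ⊆ P) : seed z R P S ⊆ Icc 1 n := by
  intro w hw
  rw [mem_Icc]
  rcases mem_seed.1 hw with rfl | hwS | ⟨a, ha, -, rfl⟩
  · omega
  · have := hP w (hS hwS); omega
  · have := hP a ha; omega

theorem lfree_seed (hqr : q.Coprime r) (hq : 0 < q) (hqR : q ∣ R) (hRz : q * R = r * z)
    (hzR : R < z) (hP : ∀ a ∈ P, 2 * a < R ∧ ¬ q ∣ a) (hS : S ⊆ P) :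
    LFree q r (seed z R P S) := by
  intro x hx y hy w hw hsol
  have hqw : q ∣ w := hqr.dvd_of_dvd_mul_left ⟨x + y, by rw [← hsol]; ring⟩
  have hwz : w = z := by
    rcases mem_seed.1 hw with rfl | hwS | ⟨a, ha, -, rfl⟩
    · rfl
    · exact absurd hqw (hP w (hS hwS)).2
    · obtain ⟨haR, hqa⟩ := hP a ha
      exact (hqa (by simpa [Nat.sub_sub_self (by omega : a ≤ R)] using Nat.dvd_sub hqR hqw)).elim
  subst hwz
  have hxy : x + y = R := Nat.eq_of_mul_eq_mul_left hq (by rw [mul_add, hsol, hRz])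
  rcases mem_seed.1 hx with rfl | hxS | ⟨a, ha, haS, rfl⟩ <;>
    rcases mem_seed.1 hy with rfl | hyS | ⟨b, hb, hbS, rfl⟩
  · omega
  · omega
  · omega
  · omega
  · have := (hP x (hS hxS)).1; have := (hP y (hS hyS)).1; omega
  · have := (hP b hb).1
    exact hbS (by rwa [show b = x by omega])
  · omega
  · have := (hP a ha).1
    exact haS (by rwa [show a = y by omega])
  · have := (hP a ha).1; have := (hP b hb).1; omega

theorem inter_eq_of_seed_subset (hRz : q * R = r * z) (hP : ∀ a ∈ P, a ≤ R) (hS : S ⊆ P)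
    (hM : LFree q r M) (hseed : seed z R P S ⊆ M) : M ∩ P = S := by
  refine Subset.antisymm (fun a ha ↦ ?_) fun a ha ↦
    mem_inter.2 ⟨hseed (mem_seed.2 (.inr (.inl ha))), hS ha⟩
  obtain ⟨haM, haP⟩ := mem_inter.1 ha
  by_contra haS
  have hRa : R - a ∈ M := hseed (mem_seed.2 (.inr (.inr ⟨a, haP, haS, rfl⟩)))
  have hz : z ∈ M := hseed (mem_seed.2 (.inl rfl))
  refine hM a haM (R - a) hRa z hz ?_
  rw [← mul_add, Nat.add_sub_cancel' (hP a haP), hRz]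

theorem exists_maximal_lfree_inter_eq (hqr : q.Coprime r) (hq : 0 < q) (hqR : q ∣ R)
    (hRz : q * R = r * z) (hzR : R < z) (hzn : z ≤ n)
    (hP : ∀ a ∈ P, 0 < a ∧ 2 * a < R ∧ ¬ q ∣ a) (hS : S ⊆ P) :
    ∃ M, Maximal (fun A ↦ A ⊆ Icc 1 n ∧ LFree q r A) M ∧ M ∩ P = S := by
  obtain ⟨M, hseed, hM⟩ := exists_maximal_lfree_superset
    (seed_subset_Icc (fun a ha ↦ ⟨(hP a ha).1, (hP a ha).2.1⟩) hzR hzn hS)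
    (lfree_seed hqr hq hqR hRz hzR (fun a ha ↦ (hP a ha).2) hS)
  exact ⟨M, hM, inter_eq_of_seed_subset hRz (fun a ha ↦ by have := (hP a ha).2.1; omega) hS
    hM.prop.2 hseed⟩

end Seed

theorem card_filter_not_dvd_Icc (U q : ℕ) : #{a ∈ Icc 1 U | ¬ q ∣ a} = U - U / q := by
  have hdvd : #{a ∈ Icc 1 U | q ∣ a} = U / q := by
    rw [← Nat.Ioc_filter_dvd_card_eq_div, ← Icc_add_one_left_eq_Ioc, zero_add]
  have := card_filter_add_card_filter_not (s := Icc 1 U) (q ∣ ·)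
  simp only [Nat.card_Icc] at this
  omega

-- Both sides are ceilings: `⌈T(q-1)/q⌉ ≤ ⌈U(q-1)/q⌉ = U - ⌊U/q⌋`.
theorem div_le_sub_div_of_le {T U q : ℕ} (hq : 0 < q) (hTU : T ≤ U) :
    (T * (q - 1) + q - 1) / q ≤ U - U / q := by
  rw [Nat.div_le_iff_le_mul_add_pred hq]
  have hUq : q * (U / q) ≤ U := Nat.mul_div_le U q
  have : U * (q - 1) ≤ q * (U - U / q) := by
    rw [Nat.mul_sub, Nat.mul_sub, Nat.mul_one, mul_comm U q]
    exact Nat.sub_le_sub_left hUq (q * U)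
  have := Nat.mul_le_mul_right (q - 1) hTU
  omega

theorem toNat_floor_le {q r n : ℕ} (hr : 0 < r) (hq : 0 < q) :
    Int.toNat ⌊(r * n : ℚ) / (2 * q) - (r * q : ℚ) / 2⌋ ≤ (r * (q * (n / (q * q))) - 1) / 2 := by
  set m := n / (q * q)
  set x : ℚ := (r * n : ℚ) / (2 * q) - (r * q : ℚ) / 2
  have hn : (n : ℚ) < q * q * (m + 1) := by
    exact_mod_cast (mul_add_one (q * q) m).symm ▸ Nat.lt_mul_div_succ n (by positivity)
  have hx : 2 * x < r * (q * m) := by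
    have hrQ : (0 : ℚ) < r := by exact_mod_cast hr
    have hqQ : (0 : ℚ) < q := by exact_mod_cast hq
    rw [show 2 * x = r * n / q - r * q by ring, sub_lt_iff_lt_add, div_lt_iff₀ hqQ]
    nlinarith
  have hfloor : 2 * ⌊x⌋ < ((r * (q * m) : ℕ) : ℤ) := by
    have : (2 * ⌊x⌋ : ℚ) < r * (q * m) := by linarith [Int.floor_le x]
    exact_mod_cast this
  rw [Int.toNat_le]
  generalize r * (q * m) = R at hfloor ⊢
  omega

/-- For `q > r ≥ 1` with `gcd(q,r) = 1` and `n` sufficiently large, the number of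
maximal subsets of `[n]` containing no solution to `qx + qy = rz` is at least
`2^(⌈⌊rn/(2q) - rq/2⌋·(q-1)/q⌉ - 1)`. -/
theorem stmt13 (q r : ℕ) (hr : 1 ≤ r) (hrq : r < q) (hgcd : Nat.gcd q r = 1) :
    ∃ N : ℕ, ∀ n : ℕ, N ≤ n →
      2 ^ ((Int.toNat ⌊(r * n : ℚ) / (2 * q) - (r * q : ℚ) / 2⌋ * (q - 1) + q - 1) / q - 1) ≤
        Nat.card {A : Finset ℕ // A ⊆ Finset.Icc 1 n ∧
          (∀ x ∈ A, ∀ y ∈ A, ∀ z ∈ A, q * x + q * y ≠ r * z) ∧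
          ∀ B : Finset ℕ, B ⊆ Finset.Icc 1 n →
            (∀ x ∈ B, ∀ y ∈ B, ∀ z ∈ B, q * x + q * y ≠ r * z) → A ⊆ B → A = B} := by
  refine ⟨q * q, fun n hn ↦ ?_⟩
  have hq : 0 < q := by omega
  set m := n / (q * q)
  set R := r * (q * m)
  set P := {a ∈ Icc 1 ((R - 1) / 2) | ¬ q ∣ a}
  have hm : 0 < m := Nat.div_pos hn (by positivity)
  have hP : ∀ a ∈ P, 0 < a ∧ 2 * a < R ∧ ¬ q ∣ a := fun a ha ↦ by
    simp only [P, mem_filter, mem_Icc] at ha; omega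
  have hqR : q ∣ R := ⟨r * m, by ring⟩
  have hRz : q * R = r * (q * (q * m)) := by ring
  have hzR : R < q * (q * m) := Nat.mul_lt_mul_of_pos_right hrq (Nat.mul_pos hq hm)
  have hzn : q * (q * m) ≤ n := by rw [← mul_assoc]; exact Nat.mul_div_le n (q * q)
  calc _ ≤ 2 ^ #P := Nat.pow_le_pow_right two_pos <| by
        rw [card_filter_not_dvd_Icc]
        exact (Nat.sub_le _ _).trans (div_le_sub_div_of_le hq (toNat_floor_le hr hq))
    _ ≤ Nat.card {A // Maximal (fun A ↦ A ⊆ Icc 1 n ∧ LFree q r A) A} :=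
        two_pow_card_le_card_maximal (fun A hA ↦ hA.1) fun S hS ↦
          exists_maximal_lfree_inter_eq hgcd hq hqR hRz hzR hzn hP hS
    _ = _ := Nat.card_congr <| Equiv.subtypeEquivRight fun A ↦ by
        simp only [maximal_iff, LFree, and_imp, and_assoc]
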